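/- Let A be an n×n real matrix, P = {β ∈ R^n : A·β ≥ 0}, and let J^= be the set of indices k such that a_k·β ≥ 0 is an implicit equality of the system (a_k·β = 0 for all β ∈ P). Then dim(P) + rank({a_k : k ∈ J^=}) = n, where dim(P) is the dimension of the affine hull of P. -/

import Mathlib

open Matrix

/-- For an `n×n` real matrix `A` defining the cone `P = {β | A·β ≥ 0}`,
with `J⁼` the set of implicit-equality indices (`a_k·β = 0` on all of `P`), one has
`dim P + rank {a_k : k ∈ J⁼} = n`, where `dim P` is the dimension of the affine hull
(= linear span, since `0 ∈ P`) of `P` and the rank is the dimension of the span of the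
corresponding rows of `A`. -/
theorem dim_add_rank_implicit_equalities
    (n : ℕ) (A : Matrix (Fin n) (Fin n) ℝ) :
    Module.finrank ℝ
        (Submodule.span ℝ {β : Fin n → ℝ | ∀ i, 0 ≤ (A *ᵥ β) i})
      + Module.finrank ℝ
        (Submodule.span ℝ
          ((fun k => A k) ''
            {k : Fin n | ∀ β : Fin n → ℝ, (∀ i, 0 ≤ (A *ᵥ β) i) → (A *ᵥ β) k = 0}))
      = n := by
  classical
  set P : Set (Fin n → ℝ) := {β : Fin n → ℝ | ∀ i, 0 ≤ (A *ᵥ β) i} with hP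
  set J : Set (Fin n) :=
    {k : Fin n | ∀ β : Fin n → ℝ, (∀ i, 0 ≤ (A *ᵥ β) i) → (A *ᵥ β) k = 0} with hJ
  -- the submatrix of rows indexed by J
  set M : Matrix (↥J) (Fin n) ℝ := fun j => A j.1 with hM
  -- Step 1: for each k ∉ J pick a point of P with strict inequality at k,
  -- and sum them to get β₀ ∈ P with strict inequality at each k ∉ J.
  have hsel : ∀ k : Fin n, k ∉ J → ∃ β ∈ P, 0 < (A *ᵥ β) k := by
    intro k hk
    simp only [hJ, Set.mem_setOf_eq, not_forall] at hk
    obtain ⟨β, hβP, hβk⟩ := hk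
    exact ⟨β, hβP, lt_of_le_of_ne (hβP k) (Ne.symm hβk)⟩
  choose! b hbP hbpos using hsel
  set β₀ : Fin n → ℝ := ∑ k ∈ Finset.univ.filter (· ∉ J), b k with hβ₀
  have hAβ₀ : A *ᵥ β₀ = ∑ k ∈ Finset.univ.filter (· ∉ J), A *ᵥ b k := by
    rw [hβ₀, ← A.mulVecLin_apply, map_sum]
    simp [mulVecLin_apply]
  have hβ₀P : β₀ ∈ P := by
    intro i
    rw [hAβ₀]
    simp only [Finset.sum_apply]
    exact Finset.sum_nonneg fun k hk => (hbP k (Finset.mem_filter.mp hk).2) i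
  have hβ₀pos : ∀ k : Fin n, k ∉ J → 0 < (A *ᵥ β₀) k := by
    intro k hk
    rw [hAβ₀]
    simp only [Finset.sum_apply]
    refine Finset.sum_pos' (fun j hj => (hbP j (Finset.mem_filter.mp hj).2) k) ?_
    exact ⟨k, Finset.mem_filter.mpr ⟨Finset.mem_univ k, hk⟩, hbpos k hk⟩
  -- Step 2: span P = ker M.mulVecLin
  have hker : Submodule.span ℝ P = LinearMap.ker M.mulVecLin := by
    apply le_antisymm
    · rw [Submodule.span_le]
      intro β hβ
      simp only [SetLike.mem_coe, LinearMap.mem_ker]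
      funext j
      have := j.2 β hβ
      rw [mulVecLin_apply]
      exact this
    · intro x hx
      simp only [LinearMap.mem_ker] at hx
      have hxJ : ∀ k ∈ J, (A *ᵥ x) k = 0 := by
        intro k hk
        have := congrFun hx ⟨k, hk⟩
        rw [mulVecLin_apply] at this
        exact this
      -- choose ε > 0 small enough
      by_cases hn : n = 0
      · subst hn
        have hx0 : x = 0 := Subsingleton.elim x 0
        rw [hx0]
        exact Submodule.zero_mem _
      have hne : (Finset.univ : Finset (Fin n)).Nonempty := by
        simpa [Finset.univ_nonempty_iff] using Fin.pos_iff_nonempty.mp (Nat.pos_of_ne_zero hn)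
      set f : Fin n → ℝ := fun k =>
        if (A *ᵥ x) k < 0 then (A *ᵥ β₀) k / (-(A *ᵥ x) k) else 1 with hf
      set ε : ℝ := Finset.univ.inf' hne f with hε
      have hfpos : ∀ k, 0 < f k := by
        intro k
        rw [hf]
        by_cases hck : (A *ᵥ x) k < 0
        · have hkJ : k ∉ J := fun h => absurd (hxJ k h) (ne_of_lt hck)
          simp only [hck, if_true]
          exact div_pos (hβ₀pos k hkJ) (by linarith)
        · simp [hck]
      have hεpos : 0 < ε := by
        rw [hε]
        exact (Finset.lt_inf'_iff hne).mpr fun k _ => hfpos k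
      have hmem : β₀ + ε • x ∈ P := by
        intro k
        have hk : (A *ᵥ (β₀ + ε • x)) k = (A *ᵥ β₀) k + ε * (A *ᵥ x) k := by
          simp [mulVec_add, mulVec_smul]
        rw [hk]
        by_cases hck : (A *ᵥ x) k < 0
        · have hkJ : k ∉ J := fun h => absurd (hxJ k h) (ne_of_lt hck)
          have hεle : ε ≤ f k := Finset.inf'_le f (Finset.mem_univ k)
          rw [hf] at hεle
          simp only [hck, if_true] at hεle
          have h1 : ε * (-(A *ᵥ x) k) ≤ (A *ᵥ β₀) k :=
            (le_div_iff₀ (by linarith)).mp hεle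
          nlinarith
        · push_neg at hck
          have := hβ₀P k
          nlinarith
      have hx' : x = ε⁻¹ • ((β₀ + ε • x) - β₀) := by
        rw [add_sub_cancel_left, smul_smul, inv_mul_cancel₀ (ne_of_gt hεpos), one_smul]
      rw [hx']
      exact Submodule.smul_mem _ _ (Submodule.sub_mem _
        (Submodule.subset_span hmem) (Submodule.subset_span hβ₀P))
  -- Step 3: rank of M is the dimension of the span of the rows indexed by J
  have hrank : Module.finrank ℝ (Submodule.span ℝ ((fun k => A k) '' J)) = M.rank := by
    have hsets : (fun k => A k) '' J = Set.range M := Set.image_eq_range _ _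
    rw [hsets]
    exact M.rank_eq_finrank_span_row.symm
  -- Step 4: rank-nullity
  have hrn := LinearMap.finrank_range_add_finrank_ker M.mulVecLin
  rw [Module.finrank_fintype_fun_eq_card, Fintype.card_fin] at hrn
  rw [hker, hrank]
  rw [Matrix.rank]
  omega
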